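/- arXiv:1504.02536 — 3 statements merged into one kernel-verified Lean document; each statement's English description precedes it below -/
import Mathlib

section
/- Exponent-form direct bound: For a universal₂ random hash function f_X : A → {1,…,M} (i.e., Pr(f_X(a₁)=f_X(a₂)) ≤ 1/M for distinct a₁,a₂) and any s ∈ [0,1], exp((s/(1+s)) C^↑_{1+s}(f_X(A)|E,X)) ≤ 1 + (1/(1+s)) M^s exp(-s H_{1+s}(A|E|P_{AE})). -/
/-!
Fix `e` and the seed `x`, and let `Q i` be the `P_{A|E=e}`-mass of the fiber of `i` under `f x`.
Then `∑ i, Q i ^ (1 + s) = ∑ a, P a * Q (f x a) ^ s`, and `Q (f x a) = P a + c_x(a)` where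
`c_x(a)` is the mass of the other points colliding with `a`; subadditivity of `t ↦ t ^ s` gives
`∑ i, Q i ^ (1 + s) ≤ ∑ a, P a ^ (1 + s) + ∑ a, P a * c_x(a) ^ s`. By Jensen for `t ↦ t ^ s` and
universality, `E_x c_x(a) ^ s ≤ (E_x c_x(a)) ^ s ≤ M ^ (-s)`. Jensen for `t ↦ t ^ (1/(1+s))`
in `x` and Bernoulli's inequality `(1 + y) ^ (1/(1+s)) ≤ 1 + y/(1+s)` then bound the left-hand
side for each `e`, and averaging over `e` finishes.
-/

open Finset

lemma Real.sum_mul_rpow_le_rpow_sum_mul {ι : Type*} (t : Finset ι) {w z : ι → ℝ}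
    (hw : ∀ i ∈ t, 0 ≤ w i) (hw₁ : ∑ i ∈ t, w i = 1) (hz : ∀ i ∈ t, 0 ≤ z i) {p : ℝ}
    (hp₀ : 0 ≤ p) (hp₁ : p ≤ 1) :
    ∑ i ∈ t, w i * z i ^ p ≤ (∑ i ∈ t, w i * z i) ^ p := by
  simpa only [smul_eq_mul] using (Real.concaveOn_rpow hp₀ hp₁).le_map_sum hw hw₁ hz

section Collision

variable {α β ι : Type*} [Fintype α] [DecidableEq α] [DecidableEq β]

def collisionMass (g : α → β) (P : α → ℝ) (a : α) : ℝ :=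
  ∑ a' with a' ≠ a ∧ g a' = g a, P a'

lemma collisionMass_nonneg (g : α → β) {P : α → ℝ} (hP : ∀ a, 0 ≤ P a) (a : α) :
    0 ≤ collisionMass g P a :=
  sum_nonneg fun a' _ => hP a'

lemma sum_fiber_eq_add_collisionMass (g : α → β) (P : α → ℝ) (a : α) :
    ∑ a' with g a' = g a, P a' = P a + collisionMass g P a := by
  rw [← add_sum_erase _ _ (by simp : a ∈ univ.filter fun a' => g a' = g a), collisionMass]
  congr 2
  ext a'
  simp [and_comm]

lemma sum_fiber_rpow_one_add_le [Fintype β] (g : α → β) {P : α → ℝ} (hP : ∀ a, 0 ≤ P a)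
    {s : ℝ} (hs₀ : 0 ≤ s) (hs₁ : s ≤ 1) :
    ∑ i, (∑ a with g a = i, P a) ^ (1 + s) ≤
      ∑ a, P a ^ (1 + s) + ∑ a, P a * collisionMass g P a ^ s := by
  have hs : (1 : ℝ) + s ≠ 0 := by linarith
  calc ∑ i, (∑ a with g a = i, P a) ^ (1 + s)
      = ∑ i, ∑ a with g a = i, P a * (∑ a' with g a' = g a, P a') ^ s := by
        refine sum_congr rfl fun i _ => ?_
        rw [Real.rpow_one_add' (sum_nonneg fun a _ => hP a) hs, sum_mul]
        refine sum_congr rfl fun a ha => ?_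
        rw [(mem_filter.1 ha).2]
    _ = ∑ a, P a * (P a + collisionMass g P a) ^ s := by
        simp only [sum_fiberwise, sum_fiber_eq_add_collisionMass]
    _ ≤ ∑ a, P a * (P a ^ s + collisionMass g P a ^ s) :=
        sum_le_sum fun a _ => mul_le_mul_of_nonneg_left
          (Real.rpow_add_le_add_rpow (hP a) (collisionMass_nonneg g hP a) hs₀ hs₁) (hP a)
    _ = ∑ a, P a ^ (1 + s) + ∑ a, P a * collisionMass g P a ^ s := by
        simp only [Real.rpow_one_add' (hP _) hs, mul_add, sum_add_distrib]

variable [Fintype ι]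

lemma sum_mul_collisionMass_le (f : ι → α → β) (μ : ι → ℝ) {δ : ℝ} (hδ : 0 ≤ δ)
    (huniv : ∀ a₁ a₂ : α, a₁ ≠ a₂ → ∑ x with f x a₁ = f x a₂, μ x ≤ δ)
    {P : α → ℝ} (hP : ∀ a, 0 ≤ P a) (hP₁ : ∑ a, P a ≤ 1) (a : α) :
    ∑ x, μ x * collisionMass (f x) P a ≤ δ := by
  calc ∑ x, μ x * collisionMass (f x) P a
      = ∑ a' with a' ≠ a, P a' * ∑ x with f x a' = f x a, μ x := by
        simp only [collisionMass, mul_sum, ← filter_filter, sum_filter]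
        rw [sum_comm]
        refine sum_congr rfl fun a' _ => ?_
        split_ifs <;> simp [mul_comm]
    _ ≤ ∑ a' with a' ≠ a, P a' * δ :=
        sum_le_sum fun a' ha' => mul_le_mul_of_nonneg_left
          (huniv a' a (mem_filter.1 ha').2) (hP a')
    _ ≤ ∑ a', P a' * δ :=
        sum_le_sum_of_subset_of_nonneg (filter_subset _ _)
          fun a' _ _ => mul_nonneg (hP a') hδ
    _ ≤ δ := by
        rw [← sum_mul]
        exact mul_le_of_le_one_left hδ hP₁

lemma sum_mul_sum_mul_collisionMass_rpow_le (f : ι → α → β) {μ : ι → ℝ} (hμ : ∀ x, 0 ≤ μ x)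
    (hμ₁ : ∑ x, μ x = 1) {δ : ℝ} (hδ : 0 ≤ δ)
    (huniv : ∀ a₁ a₂ : α, a₁ ≠ a₂ → ∑ x with f x a₁ = f x a₂, μ x ≤ δ)
    {P : α → ℝ} (hP : ∀ a, 0 ≤ P a) (hP₁ : ∑ a, P a ≤ 1) {s : ℝ} (hs₀ : 0 ≤ s) (hs₁ : s ≤ 1) :
    ∑ x, μ x * ∑ a, P a * collisionMass (f x) P a ^ s ≤ δ ^ s := by
  have hcoll a : ∑ x, μ x * collisionMass (f x) P a ^ s ≤ δ ^ s :=
    calc ∑ x, μ x * collisionMass (f x) P a ^ s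
        ≤ (∑ x, μ x * collisionMass (f x) P a) ^ s :=
          Real.sum_mul_rpow_le_rpow_sum_mul _ (fun x _ => hμ x) hμ₁
            (fun x _ => collisionMass_nonneg _ hP a) hs₀ hs₁
      _ ≤ δ ^ s := Real.rpow_le_rpow
          (sum_nonneg fun x _ => mul_nonneg (hμ x) (collisionMass_nonneg _ hP a))
          (sum_mul_collisionMass_le f μ hδ huniv hP hP₁ a) hs₀
  calc ∑ x, μ x * ∑ a, P a * collisionMass (f x) P a ^ s
      = ∑ a, P a * ∑ x, μ x * collisionMass (f x) P a ^ s := by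
        simp only [mul_sum]
        rw [sum_comm]
        exact sum_congr rfl fun a _ => sum_congr rfl fun x _ => by ring
    _ ≤ ∑ a, P a * δ ^ s := sum_le_sum fun a _ => mul_le_mul_of_nonneg_left (hcoll a) (hP a)
    _ ≤ δ ^ s := by
        rw [← sum_mul]
        exact mul_le_of_le_one_left (by positivity) hP₁

lemma sum_mul_sum_fiber_rpow_one_add_le [Fintype β] (f : ι → α → β) {μ : ι → ℝ}
    (hμ : ∀ x, 0 ≤ μ x) (hμ₁ : ∑ x, μ x = 1) {δ : ℝ} (hδ : 0 ≤ δ)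
    (huniv : ∀ a₁ a₂ : α, a₁ ≠ a₂ → ∑ x with f x a₁ = f x a₂, μ x ≤ δ)
    {P : α → ℝ} (hP : ∀ a, 0 ≤ P a) (hP₁ : ∑ a, P a ≤ 1) {s : ℝ} (hs₀ : 0 ≤ s) (hs₁ : s ≤ 1) :
    ∑ x, μ x * ∑ i, (∑ a with f x a = i, P a) ^ (1 + s) ≤ ∑ a, P a ^ (1 + s) + δ ^ s :=
  calc ∑ x, μ x * ∑ i, (∑ a with f x a = i, P a) ^ (1 + s)
      ≤ ∑ x, μ x * (∑ a, P a ^ (1 + s) + ∑ a, P a * collisionMass (f x) P a ^ s) :=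
        sum_le_sum fun x _ =>
          mul_le_mul_of_nonneg_left (sum_fiber_rpow_one_add_le (f x) hP hs₀ hs₁) (hμ x)
    _ = ∑ a, P a ^ (1 + s) + ∑ x, μ x * ∑ a, P a * collisionMass (f x) P a ^ s := by
        simp only [mul_add, sum_add_distrib, ← sum_mul, hμ₁, one_mul]
    _ ≤ ∑ a, P a ^ (1 + s) + δ ^ s := by
        gcongr
        exact sum_mul_sum_mul_collisionMass_rpow_le f hμ hμ₁ hδ huniv hP hP₁ hs₀ hs₁

theorem rpow_mul_sum_mul_sum_fiber_rpow_le [Fintype β] (f : ι → α → β) {μ : ι → ℝ}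
    (hμ : ∀ x, 0 ≤ μ x) (hμ₁ : ∑ x, μ x = 1) {M : ℝ} (hM : 0 ≤ M)
    (huniv : ∀ a₁ a₂ : α, a₁ ≠ a₂ → ∑ x with f x a₁ = f x a₂, μ x ≤ 1 / M)
    {P : α → ℝ} (hP : ∀ a, 0 ≤ P a) (hP₁ : ∑ a, P a ≤ 1) {s : ℝ} (hs₀ : 0 ≤ s) (hs₁ : s ≤ 1) :
    M ^ (s / (1 + s)) * ∑ x, μ x * (∑ i, (∑ a with f x a = i, P a) ^ (1 + s)) ^ (1 / (1 + s)) ≤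
      1 + 1 / (1 + s) * (M ^ s * ∑ a, P a ^ (1 + s)) := by
  set T := fun x => ∑ i, (∑ a with f x a = i, P a) ^ (1 + s)
  set S := ∑ a, P a ^ (1 + s)
  have hT₀ x : 0 ≤ T x :=
    sum_nonneg fun i _ => Real.rpow_nonneg (sum_nonneg fun a _ => hP a) _
  have hS₀ : 0 ≤ S := sum_nonneg fun a _ => Real.rpow_nonneg (hP a) _
  have hMs : 0 ≤ M ^ s := Real.rpow_nonneg hM s
  have hq₀ : 0 ≤ 1 / (1 + s) := by positivity
  have hq₁ : 1 / (1 + s) ≤ 1 := by rw [div_le_one (by linarith)]; linarith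
  have hmean : ∑ x, μ x * (M ^ s * T x) ≤ 1 + M ^ s * S := by
    have hT := sum_mul_sum_fiber_rpow_one_add_le f hμ hμ₁ (one_div_nonneg.2 hM) huniv hP hP₁
      hs₀ hs₁
    have hMδ : M ^ s * (1 / M) ^ s ≤ 1 := by
      rw [← Real.mul_rpow hM (one_div_nonneg.2 hM), mul_one_div]
      exact Real.rpow_le_one (div_nonneg hM hM) (div_self_le_one M) hs₀
    calc ∑ x, μ x * (M ^ s * T x) = M ^ s * ∑ x, μ x * T x := by
          rw [mul_sum]; exact sum_congr rfl fun x _ => by ring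
      _ ≤ M ^ s * (S + (1 / M) ^ s) := mul_le_mul_of_nonneg_left hT hMs
      _ ≤ 1 + M ^ s * S := by linarith
  calc M ^ (s / (1 + s)) * ∑ x, μ x * T x ^ (1 / (1 + s))
      = ∑ x, μ x * (M ^ s * T x) ^ (1 / (1 + s)) := by
        rw [mul_sum]
        refine sum_congr rfl fun x _ => ?_
        rw [Real.mul_rpow hMs (hT₀ x), ← Real.rpow_mul hM, mul_one_div]
        ring
    _ ≤ (∑ x, μ x * (M ^ s * T x)) ^ (1 / (1 + s)) :=
        Real.sum_mul_rpow_le_rpow_sum_mul _ (fun x _ => hμ x) hμ₁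
          (fun x _ => mul_nonneg hMs (hT₀ x)) hq₀ hq₁
    _ ≤ (1 + M ^ s * S) ^ (1 / (1 + s)) :=
        Real.rpow_le_rpow (sum_nonneg fun x _ => mul_nonneg (hμ x) (mul_nonneg hMs (hT₀ x)))
          hmean hq₀
    _ ≤ 1 + 1 / (1 + s) * (M ^ s * S) :=
        rpow_one_add_le_one_add_mul_self (by linarith [mul_nonneg hMs hS₀]) hq₀ hq₁

end Collision

theorem exponent_direct_bound_gallager_general {A E X : Type*} [Fintype A] [Fintype E] [Fintype X]
    (M : ℕ) (f : X → A → Fin M)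
    (μ : X → ℝ) (hμ : ∀ x, 0 ≤ μ x) (hμsum : ∑ x, μ x = 1)
    (huniv : ∀ a₁ a₂ : A, a₁ ≠ a₂ →
      ∑ x ∈ Finset.univ.filter (fun x => f x a₁ = f x a₂), μ x ≤ 1 / M)
    (PE : E → ℝ) (hPE : ∀ e, 0 ≤ PE e) (hPEsum : ∑ e, PE e = 1)
    (PA : A → E → ℝ) (hPA : ∀ a e, 0 ≤ PA a e) (hPAsum : ∀ e, ∑ a, PA a e = 1)
    (s : ℝ) (hs : 0 < s) (hs1 : s ≤ 1) :
    (M : ℝ) ^ (s/(1 + s)) * (∑ x, μ x * ∑ e, PE e *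
        (∑ i : Fin M,
          (∑ a ∈ Finset.univ.filter (fun a => f x a = i), PA a e) ^ (1 + s))
            ^ (1/(1 + s))) ≤
      1 + (1/(1 + s)) * (M : ℝ) ^ s * ∑ e, PE e * ∑ a, PA a e ^ (1 + s) := by
  classical
  calc (M : ℝ) ^ (s / (1 + s)) * ∑ x, μ x * ∑ e, PE e *
        (∑ i : Fin M, (∑ a with f x a = i, PA a e) ^ (1 + s)) ^ (1 / (1 + s))
      = ∑ e, PE e * ((M : ℝ) ^ (s / (1 + s)) * ∑ x, μ x *
          (∑ i : Fin M, (∑ a with f x a = i, PA a e) ^ (1 + s)) ^ (1 / (1 + s))) := by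
        simp only [mul_sum]
        rw [sum_comm]
        exact sum_congr rfl fun e _ => sum_congr rfl fun x _ => by ring
    _ ≤ ∑ e, PE e * (1 + 1 / (1 + s) * ((M : ℝ) ^ s * ∑ a, PA a e ^ (1 + s))) :=
        sum_le_sum fun e _ => mul_le_mul_of_nonneg_left
          (rpow_mul_sum_mul_sum_fiber_rpow_le f hμ hμsum (Nat.cast_nonneg M) huniv
            (fun a => hPA a e) (hPAsum e).le hs.le hs1) (hPE e)
    _ = 1 + (1 / (1 + s)) * (M : ℝ) ^ s * ∑ e, PE e * ∑ a, PA a e ^ (1 + s) := by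
        rw [mul_sum]
        simp only [mul_add, sum_add_distrib, mul_one, hPEsum]
        exact congrArg _ (sum_congr rfl fun e _ => by ring)

/-- Exponent-form direct bound: for a universal₂ random hash `f_X` into `{1,…,M}`
and `s ∈ (0,1]`,
`exp((s/(1+s)) C↑_{1+s}(f_X(A)|E,X)) ≤ 1 + (1/(1+s)) M^s exp(-s H_{1+s}(A|E|P_{AE}))`. -/
theorem exponent_direct_bound_gallager {A E X : Type*} [Fintype A] [Fintype E] [Fintype X]
    (M : ℕ) (hM : 0 < M) (f : X → A → Fin M)
    (μ : X → ℝ) (hμ : ∀ x, 0 ≤ μ x) (hμsum : ∑ x, μ x = 1)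
    (huniv : ∀ a₁ a₂ : A, a₁ ≠ a₂ →
      ∑ x ∈ Finset.univ.filter (fun x => f x a₁ = f x a₂), μ x ≤ 1 / M)
    (PE : E → ℝ) (hPE : ∀ e, 0 ≤ PE e) (hPEsum : ∑ e, PE e = 1)
    (PA : A → E → ℝ) (hPA : ∀ a e, 0 ≤ PA a e) (hPAsum : ∀ e, ∑ a, PA a e = 1)
    (s : ℝ) (hs : 0 < s) (hs1 : s ≤ 1) :
    (M : ℝ) ^ (s/(1 + s)) * (∑ x, μ x * ∑ e, PE e *
        (∑ i : Fin M,
          (∑ a ∈ Finset.univ.filter (fun a => f x a = i), PA a e) ^ (1 + s))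
            ^ (1/(1 + s))) ≤
      1 + (1/(1 + s)) * (M : ℝ) ^ s * ∑ e, PE e * ∑ a, PA a e ^ (1 + s) :=
  exponent_direct_bound_gallager_general M f μ hμ hμsum huniv PE hPE hPEsum PA hPA hPAsum s hs hs1
end

section
/- Second-order direct one-shot bound: For an ε-almost universal₂ random hash f_X : A → {1,…,M}, any s ∈ [0,1], and any c > 0, exp(-s C_{1-s}(f_X(A)|E,X)) ≥ P_{AE}{(a,e): P_{A|E}(a|e) ≤ c/M} · (1/(c+ε))^s. -/
/-!
Fix `e` and a hash `x`, and let `P i` be the conditional mass of the bin `i`. Then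
`∑ i, P i ^ (1 - s) = ∑ a, P_{A|E}(a|e) · P (f x a) ^ (-s)`, and we keep only the `a` with
`P_{A|E}(a|e) ≤ c / M`. For such `a`, almost universality bounds the expected mass of the bin of
`a` by `P_{A|E}(a|e) + ε / M ≤ (c + ε) / M`, and convexity of `y ↦ y ^ (-s)` (Jensen) turns
this into `E_X P (f_X a) ^ (-s) ≥ ((c + ε) / M) ^ (-s)`. Averaging over `e` and pulling out
`M ^ (-s)` gives the bound.
-/

open Finset

lemma one_sub_mul_sub_one_le_rpow_neg {s u : ℝ} (hs : 0 ≤ s) (hu : 0 < u) :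
    1 - s * (u - 1) ≤ u ^ (-s) := by
  rw [Real.rpow_def_of_pos hu]
  calc 1 - s * (u - 1) ≤ Real.log u * -s + 1 := by
        nlinarith [Real.log_le_sub_one_of_pos hu]
    _ ≤ Real.exp (Real.log u * -s) := Real.add_one_le_exp _

/-- Jensen's inequality for the convex decreasing function `y ↦ y ^ (-s)`, proved with its tangent
line at `b`. -/
lemma rpow_neg_le_sum_mul_rpow_neg {X : Type*} [Fintype X] {μ : X → ℝ} (hμ : ∀ x, 0 ≤ μ x)
    (hμsum : ∑ x, μ x = 1)
    {y : X → ℝ} (hy : ∀ x, 0 < y x) {b s : ℝ} (hb : 0 < b) (hs : 0 ≤ s)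
    (hyb : ∑ x, μ x * y x ≤ b) :
    b ^ (-s) ≤ ∑ x, μ x * y x ^ (-s) := by
  have tangent : ∀ x, b ^ (-s) * (1 - s * (y x / b - 1)) ≤ y x ^ (-s) := fun x => by
    rw [← mul_div_cancel₀ (y x) hb.ne', Real.mul_rpow hb.le (div_pos (hy x) hb).le,
      mul_div_cancel_left₀ _ hb.ne']
    exact mul_le_mul_of_nonneg_left (one_sub_mul_sub_one_le_rpow_neg hs (div_pos (hy x) hb))
      (Real.rpow_nonneg hb.le _)
  have average : ∑ x, μ x * (b ^ (-s) * (1 - s * (y x / b - 1)))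
      = b ^ (-s) * (1 - s * ((∑ x, μ x * y x) / b - 1)) :=
    calc _ = ∑ x, b ^ (-s) * (1 + s) * μ x - ∑ x, b ^ (-s) * s / b * (μ x * y x) := by
          rw [← Finset.sum_sub_distrib]
          exact Finset.sum_congr rfl fun x _ => by ring
      _ = b ^ (-s) * (1 - s * ((∑ x, μ x * y x) / b - 1)) := by
          rw [← Finset.mul_sum, ← Finset.mul_sum, hμsum]
          ring
  have mean_le : (∑ x, μ x * y x) / b - 1 ≤ 0 := by
    rw [sub_nonpos, div_le_one hb]; exact hyb
  calc b ^ (-s) ≤ b ^ (-s) * (1 - s * ((∑ x, μ x * y x) / b - 1)) :=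
        le_mul_of_one_le_right (Real.rpow_nonneg hb.le _) (by nlinarith)
    _ = ∑ x, μ x * (b ^ (-s) * (1 - s * (y x / b - 1))) := average.symm
    _ ≤ ∑ x, μ x * y x ^ (-s) :=
        Finset.sum_le_sum fun x _ => mul_le_mul_of_nonneg_left (tangent x) (hμ x)

lemma mul_rpow_neg_le_rpow_one_sub {x : ℝ} (hx : 0 ≤ x) (s : ℝ) :
    x * x ^ (-s) ≤ x ^ (1 - s) := by
  rcases hx.eq_or_lt with rfl | hx
  · simpa using Real.rpow_nonneg le_rfl (1 - s)
  · rw [sub_eq_add_neg, Real.rpow_add hx, Real.rpow_one]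

section Fibers

variable {A ι : Type*} [Fintype A] [DecidableEq ι]

/-- The pushforward of the weights `p` along `g`; for `p = P_{A|E}(·|e)` and `g = f x` this is
`P_{f_x(A)|E}(·|e)`. -/
def fiberMass (g : A → ι) (p : A → ℝ) (i : ι) : ℝ :=
  ∑ a ∈ univ.filter (fun a => g a = i), p a

lemma fiberMass_nonneg (g : A → ι) {p : A → ℝ} (hp : ∀ a, 0 ≤ p a) (i : ι) :
    0 ≤ fiberMass g p i :=
  Finset.sum_nonneg fun a _ => hp a

lemma le_fiberMass_self (g : A → ι) {p : A → ℝ} (hp : ∀ a, 0 ≤ p a) (a : A) :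
    p a ≤ fiberMass g p (g a) :=
  Finset.single_le_sum (fun a' _ => hp a') (by simp)

lemma sum_mul_fiberMass_rpow_neg_le [Fintype ι] (g : A → ι) {p : A → ℝ} (hp : ∀ a, 0 ≤ p a)
    (G : Finset A) (s : ℝ) :
    ∑ a ∈ G, p a * fiberMass g p (g a) ^ (-s) ≤ ∑ i, fiberMass g p i ^ (1 - s) := by
  rw [← Finset.sum_fiberwise G g]
  refine Finset.sum_le_sum fun i _ => ?_
  calc ∑ a ∈ G.filter (fun a => g a = i), p a * fiberMass g p (g a) ^ (-s)
      = (∑ a ∈ G.filter (fun a => g a = i), p a) * fiberMass g p i ^ (-s) := by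
        rw [Finset.sum_mul]
        exact Finset.sum_congr rfl fun a ha => by rw [(Finset.mem_filter.mp ha).2]
    _ ≤ fiberMass g p i * fiberMass g p i ^ (-s) := by
        gcongr
        · exact Real.rpow_nonneg (fiberMass_nonneg g hp i) _
        · exact Finset.sum_le_sum_of_subset_of_nonneg
            (Finset.filter_subset_filter _ (Finset.subset_univ G)) fun a _ _ => hp a
    _ ≤ fiberMass g p i ^ (1 - s) := mul_rpow_neg_le_rpow_one_sub (fiberMass_nonneg g hp i) s

end Fibers

section Hashing

variable {X A ι : Type*} [Fintype X] [Fintype A] [DecidableEq ι]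

/-- `δ` bounds the collision probability of the random hash `f`, distributed by `μ`; the paper's
`ε`-almost universal₂ hash into `{1,…,M}` is the case `δ = ε / M`. -/
def IsAlmostUniversal₂ (μ : X → ℝ) (f : X → A → ι) (δ : ℝ) : Prop :=
  ∀ a₁ a₂ : A, a₁ ≠ a₂ → ∑ x ∈ univ.filter (fun x => f x a₁ = f x a₂), μ x ≤ δ

lemma sum_mul_fiberMass_le {μ : X → ℝ} (hμsum : ∑ x, μ x = 1) {f : X → A → ι} {δ : ℝ}
    (hf : IsAlmostUniversal₂ μ f δ) (hδ : 0 ≤ δ) {p : A → ℝ} (hp : ∀ a, 0 ≤ p a) (a : A) :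
    ∑ x, μ x * fiberMass (f x) p (f x a) ≤ p a + δ * ∑ a', p a' := by
  classical
  have swap : ∑ x, μ x * fiberMass (f x) p (f x a)
      = ∑ a', p a' * ∑ x ∈ univ.filter (fun x => f x a' = f x a), μ x := by
    simp only [fiberMass, Finset.sum_filter, Finset.mul_sum, mul_ite, mul_zero]
    rw [Finset.sum_comm]
    exact Finset.sum_congr rfl fun a' _ => Finset.sum_congr rfl fun x _ => by
      split_ifs <;> ring
  have others : ∑ a' ∈ univ.erase a, p a' * ∑ x ∈ univ.filter (fun x => f x a' = f x a), μ x
      ≤ δ * ∑ a', p a' := by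
    rw [Finset.mul_sum]
    calc _ ≤ ∑ a' ∈ univ.erase a, δ * p a' := Finset.sum_le_sum fun a' ha' => by
            rw [mul_comm δ]
            exact mul_le_mul_of_nonneg_left (hf a' a (Finset.ne_of_mem_erase ha')) (hp a')
      _ ≤ ∑ a', δ * p a' := Finset.sum_le_sum_of_subset_of_nonneg (Finset.erase_subset a _)
            fun a' _ _ => mul_nonneg hδ (hp a')
  rw [swap, ← Finset.add_sum_erase _ _ (Finset.mem_univ a),
    Finset.filter_true_of_mem fun _ _ => rfl, hμsum, mul_one]
  exact add_le_add_right others _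

end Hashing

lemma IsAlmostUniversal₂.sum_filter_le_mul_rpow_neg_le {X A ι : Type*} [Fintype X] [Fintype A]
    [Fintype ι] [DecidableEq ι] {μ : X → ℝ} {f : X → A → ι} {δ : ℝ}
    (hf : IsAlmostUniversal₂ μ f δ) (hμ : ∀ x, 0 ≤ μ x) (hμsum : ∑ x, μ x = 1) (hδ : 0 ≤ δ)
    {p : A → ℝ} (hp : ∀ a, 0 ≤ p a) (hpsum : ∑ a, p a ≤ 1) (t : ℝ) {s : ℝ} (hs : 0 ≤ s) :
    (∑ a ∈ univ.filter (fun a => p a ≤ t), p a) * (t + δ) ^ (-s) ≤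
      ∑ x, μ x * ∑ i, fiberMass (f x) p i ^ (1 - s) := by
  have term_le : ∀ a, p a ≤ t →
      p a * (t + δ) ^ (-s) ≤ ∑ x, μ x * (p a * fiberMass (f x) p (f x a) ^ (-s)) := by
    intro a hat
    obtain hpa | hpa := (hp a).eq_or_lt
    · simp [← hpa]
    have mean_le : ∑ x, μ x * fiberMass (f x) p (f x a) ≤ t + δ :=
      (sum_mul_fiberMass_le hμsum hf hδ hp a).trans
        (add_le_add hat (mul_le_of_le_one_right hδ hpsum))
    have jensen := rpow_neg_le_sum_mul_rpow_neg hμ hμsum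
      (fun x => hpa.trans_le (le_fiberMass_self (f x) hp a)) (by linarith) hs mean_le
    calc p a * (t + δ) ^ (-s) ≤ p a * ∑ x, μ x * fiberMass (f x) p (f x a) ^ (-s) := by gcongr
      _ = _ := by
        rw [Finset.mul_sum]
        exact Finset.sum_congr rfl fun x _ => mul_left_comm _ _ _
  calc (∑ a ∈ univ.filter (fun a => p a ≤ t), p a) * (t + δ) ^ (-s)
      ≤ ∑ a ∈ univ.filter (fun a => p a ≤ t),
          ∑ x, μ x * (p a * fiberMass (f x) p (f x a) ^ (-s)) := by
        rw [Finset.sum_mul]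
        exact Finset.sum_le_sum fun a ha => term_le a (Finset.mem_filter.mp ha).2
    _ = ∑ x, μ x *
          ∑ a ∈ univ.filter (fun a => p a ≤ t), p a * fiberMass (f x) p (f x a) ^ (-s) := by
        rw [Finset.sum_comm]
        simp only [Finset.mul_sum]
    _ ≤ ∑ x, μ x * ∑ i, fiberMass (f x) p i ^ (1 - s) :=
        Finset.sum_le_sum fun x _ => mul_le_mul_of_nonneg_left
          (sum_mul_fiberMass_rpow_neg_le (f x) hp _ s) (hμ x)

theorem second_order_direct_one_shot_general {A E X : Type*} [Fintype A] [Fintype E] [Fintype X]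
    (M : ℕ) (hM : 0 < M) (f : X → A → Fin M)
    (μ : X → ℝ) (hμ : ∀ x, 0 ≤ μ x) (hμsum : ∑ x, μ x = 1)
    (ε : ℝ) (hε : 0 < ε)
    (huniv : ∀ a₁ a₂ : A, a₁ ≠ a₂ →
      ∑ x ∈ Finset.univ.filter (fun x => f x a₁ = f x a₂), μ x ≤ ε / M)
    (PE : E → ℝ) (hPE : ∀ e, 0 ≤ PE e)
    (PA : A → E → ℝ) (hPA : ∀ a e, 0 ≤ PA a e) (hPAsum : ∀ e, ∑ a, PA a e = 1)
    (s : ℝ) (hs : 0 < s) (c : ℝ) (hc : 0 < c) :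
    (∑ e, PE e * ∑ a ∈ Finset.univ.filter (fun a => PA a e ≤ c / M), PA a e) *
        (1/(c + ε)) ^ s ≤
      (M : ℝ) ^ (-s) * (∑ x, μ x * ∑ e, PE e * ∑ i : Fin M,
        (∑ a ∈ Finset.univ.filter (fun a => f x a = i), PA a e) ^ (1 - s)) := by
  have hM' : (0 : ℝ) < M := by exact_mod_cast hM
  have hf : IsAlmostUniversal₂ μ f (ε / M) := huniv
  have per_e := fun e => hf.sum_filter_le_mul_rpow_neg_le hμ hμsum (by positivity)
    (hPA · e) (hPAsum e).le (c / M) hs.le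
  have hpow : (1 / (c + ε)) ^ s = (M : ℝ) ^ (-s) * (c / M + ε / M) ^ (-s) := by
    have hcε : 0 ≤ c + ε := by positivity
    rw [one_div, Real.inv_rpow hcε, ← Real.rpow_neg hcε, ← add_div, Real.div_rpow hcε hM'.le,
      mul_div_cancel₀ _ (Real.rpow_pos_of_pos hM' _).ne']
  calc _ = (M : ℝ) ^ (-s) * ∑ e, PE e *
        ((∑ a ∈ univ.filter (fun a => PA a e ≤ c / M), PA a e) * (c / M + ε / M) ^ (-s)) := by
        rw [hpow, Finset.sum_mul, Finset.mul_sum]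
        exact Finset.sum_congr rfl fun e _ => by ring
    _ ≤ (M : ℝ) ^ (-s) * ∑ e, PE e * ∑ x, μ x * ∑ i, fiberMass (f x) (PA · e) i ^ (1 - s) := by
        gcongr with e
        exacts [hPE e, per_e e]
    _ = _ := by
        simp only [fiberMass, Finset.mul_sum]
        rw [Finset.sum_comm]
        exact Finset.sum_congr rfl fun x _ => Finset.sum_congr rfl fun e _ =>
          Finset.sum_congr rfl fun i _ => by ring

/-- Second-order direct one-shot bound: for an `ε`-almost universal₂ random hash
`f_X` into `{1,…,M}`, `s ∈ (0,1]` and `c > 0`,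
`exp(-s C_{1-s}(f_X(A)|E,X)) ≥ P_{AE}{(a,e): P_{A|E}(a|e) ≤ c/M} · (1/(c+ε))^s`. -/
theorem second_order_direct_one_shot {A E X : Type*} [Fintype A] [Fintype E] [Fintype X]
    (M : ℕ) (hM : 0 < M) (f : X → A → Fin M)
    (μ : X → ℝ) (hμ : ∀ x, 0 ≤ μ x) (hμsum : ∑ x, μ x = 1)
    (ε : ℝ) (hε : 0 < ε)
    (huniv : ∀ a₁ a₂ : A, a₁ ≠ a₂ →
      ∑ x ∈ Finset.univ.filter (fun x => f x a₁ = f x a₂), μ x ≤ ε / M)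
    (PE : E → ℝ) (hPE : ∀ e, 0 ≤ PE e) (hPEsum : ∑ e, PE e = 1)
    (PA : A → E → ℝ) (hPA : ∀ a e, 0 ≤ PA a e) (hPAsum : ∀ e, ∑ a, PA a e = 1)
    (s : ℝ) (hs : 0 < s) (hs1 : s ≤ 1) (c : ℝ) (hc : 0 < c) :
    (∑ e, PE e * ∑ a ∈ Finset.univ.filter (fun a => PA a e ≤ c / M), PA a e) *
        (1/(c + ε)) ^ s ≤
      (M : ℝ) ^ (-s) * (∑ x, μ x * ∑ e, PE e * ∑ i : Fin M,
        (∑ a ∈ Finset.univ.filter (fun a => f x a = i), PA a e) ^ (1 - s)) :=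
  second_order_direct_one_shot_general M hM f μ hμ hμsum ε hε huniv PE hPE PA hPA hPAsum s hs c hc
end

section
/- Data-processing converse one-shot bound: Fix c > 1 and s ∈ (0,1). Any function f : A → {1,…,M} satisfies exp(-s C_{1-s}(f(A)|E|P_{AE})) ≤ ∑_{(a,e): P_{A|E}(a|e) ≥ c/M} P_E(e) P_{A|E}(a|e)^{1-s} M^{-s} + ∑_e P_E(e) · (P_{A|E=e}{a : P_{A|E}(a|e) < c/M})^{1-s}, and consequently exp(-s C_{1-s}(f(A)|E|P_{AE})) ≤ c^{-s} P_{AE}{(a,e): P_{A|E}(a|e) ≥ c/M} + (P_{AE}{(a,e): P_{A|E}(a|e) < c/M})^{1-s}. -/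
/-! For each `e`, split every fibre of `f` into heavy letters (`P_{A|E}(a|e) ≥ c/M`) and light
ones. Subadditivity of `x ↦ x ^ (1 - s)` lets every heavy letter count on its own, while the light
letters of all fibres are merged and Jensen's inequality for the uniform average over the `M` bins
bounds them by `M ^ s (P_{A|E=e}(light)) ^ (1 - s)`. For the second bound, a heavy letter has
`P ^ (1 - s) M ^ (-s) = P (P M) ^ (-s) ≤ c ^ (-s) P`, and Jensen in `e` handles the light part. -/

open Finset

namespace Real

variable {ι : Type*} {p : ℝ}

lemma rpow_sum_le_sum_rpow (s : Finset ι) {x : ι → ℝ} (hx : ∀ i ∈ s, 0 ≤ x i)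
    (hp₀ : 0 < p) (hp₁ : p ≤ 1) : (∑ i ∈ s, x i) ^ p ≤ ∑ i ∈ s, x i ^ p := by
  classical
  induction s using Finset.induction with
  | empty => simp [zero_rpow hp₀.ne']
  | insert i s hi ih =>
    rw [sum_insert hi, sum_insert hi]
    have hxi := hx i (mem_insert_self i s)
    have hxs : ∀ j ∈ s, 0 ≤ x j := fun j hj => hx j (mem_insert_of_mem hj)
    calc (x i + ∑ j ∈ s, x j) ^ p ≤ x i ^ p + (∑ j ∈ s, x j) ^ p :=
          rpow_add_le_add_rpow hxi (sum_nonneg hxs) hp₀.le hp₁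
      _ ≤ x i ^ p + ∑ j ∈ s, x j ^ p := by gcongr; exact ih hxs

lemma rpow_sum_le_sum_filter_rpow_add_rpow_sum_filter_not (s : Finset ι) {x : ι → ℝ}
    (hx : ∀ i ∈ s, 0 ≤ x i) (P : ι → Prop) [DecidablePred P] (hp₀ : 0 < p) (hp₁ : p ≤ 1) :
    (∑ i ∈ s, x i) ^ p ≤ ∑ i ∈ s with P i, x i ^ p + (∑ i ∈ s with ¬P i, x i) ^ p := by
  have hxP : ∀ i ∈ s.filter P, 0 ≤ x i := fun i hi => hx i (mem_of_mem_filter i hi)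
  rw [← sum_filter_add_sum_filter_not s P]
  calc (∑ i ∈ s with P i, x i + ∑ i ∈ s with ¬P i, x i) ^ p
      ≤ (∑ i ∈ s with P i, x i) ^ p + (∑ i ∈ s with ¬P i, x i) ^ p :=
        rpow_add_le_add_rpow (sum_nonneg hxP)
          (sum_nonneg fun i hi => hx i (mem_of_mem_filter i hi)) hp₀.le hp₁
    _ ≤ ∑ i ∈ s with P i, x i ^ p + (∑ i ∈ s with ¬P i, x i) ^ p := by
        gcongr; exact rpow_sum_le_sum_rpow _ hxP hp₀ hp₁

lemma sum_mul_rpow_le_rpow_sum_mul_s14 (s : Finset ι) {w x : ι → ℝ} (hw : ∀ i ∈ s, 0 ≤ w i)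
    (hw₁ : ∑ i ∈ s, w i = 1) (hx : ∀ i ∈ s, 0 ≤ x i) (hp₀ : 0 ≤ p) (hp₁ : p ≤ 1) :
    ∑ i ∈ s, w i * x i ^ p ≤ (∑ i ∈ s, w i * x i) ^ p :=
  (concaveOn_rpow hp₀ hp₁).le_map_sum hw hw₁ hx

lemma card_rpow_mul_sum_rpow_le_rpow_sum (s : Finset ι) {x : ι → ℝ} (hx : ∀ i ∈ s, 0 ≤ x i)
    (hp₀ : 0 ≤ p) (hp₁ : p ≤ 1) :
    (#s : ℝ) ^ (p - 1) * ∑ i ∈ s, x i ^ p ≤ (∑ i ∈ s, x i) ^ p := by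
  rcases s.eq_empty_or_nonempty with rfl | hs
  · simpa using rpow_nonneg le_rfl p
  have hn : (0 : ℝ) < #s := by exact_mod_cast hs.card_pos
  have hjensen := sum_mul_rpow_le_rpow_sum_mul_s14 s (w := fun _ => (#s : ℝ)⁻¹)
    (fun _ _ => by positivity) (by simp [hn.ne']) hx hp₀ hp₁
  rw [← mul_sum, ← mul_sum, mul_rpow (by positivity) (sum_nonneg hx),
    inv_rpow hn.le, ← rpow_neg hn.le] at hjensen
  calc (#s : ℝ) ^ (p - 1) * ∑ i ∈ s, x i ^ p
      = (#s : ℝ) ^ p * ((#s : ℝ)⁻¹ * ∑ i ∈ s, x i ^ p) := by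
        rw [rpow_sub_one hn.ne']; field_simp
    _ ≤ (#s : ℝ) ^ p * ((#s : ℝ) ^ (-p) * (∑ i ∈ s, x i) ^ p) := by gcongr
    _ = (∑ i ∈ s, x i) ^ p := by
        rw [← mul_assoc, ← rpow_add hn, add_neg_cancel, rpow_zero, one_mul]

lemma rpow_one_sub_mul_rpow_neg_le {x y c s : ℝ} (hy : 0 ≤ y) (hc : 0 < c) (hcxy : c ≤ x * y)
    (hs : 0 ≤ s) : x ^ (1 - s) * y ^ (-s) ≤ c ^ (-s) * x := by
  have hx : 0 < x := pos_of_mul_pos_left (hc.trans_le hcxy) hy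
  calc x ^ (1 - s) * y ^ (-s) = (x * y) ^ (-s) * x := by
        rw [mul_rpow hx.le hy, sub_eq_add_neg, rpow_add hx, rpow_one]; ring
    _ ≤ c ^ (-s) * x :=
        mul_le_mul_of_nonneg_right (rpow_le_rpow_of_nonpos hc hcxy (neg_nonpos.2 hs)) hx.le

end Real

open Real

lemma card_rpow_mul_sum_rpow_sum_fiber_le {α β : Type*} [Fintype α] [Fintype β] [DecidableEq β]
    (f : α → β) {x : α → ℝ} (hx : ∀ a, 0 ≤ x a) (P : α → Prop) [DecidablePred P] {p : ℝ}
    (hp₀ : 0 < p) (hp₁ : p ≤ 1) :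
    (Fintype.card β : ℝ) ^ (p - 1) * ∑ b, (∑ a with f a = b, x a) ^ p ≤
      (Fintype.card β : ℝ) ^ (p - 1) * ∑ a with P a, x a ^ p + (∑ a with ¬P a, x a) ^ p := by
  have hsplit : ∑ b, (∑ a with f a = b, x a) ^ p ≤
      ∑ a with P a, x a ^ p + ∑ b, (∑ a ∈ {a | ¬P a} with f a = b, x a) ^ p :=
    calc ∑ b, (∑ a with f a = b, x a) ^ p
        ≤ ∑ b, (∑ a ∈ {a | f a = b} with P a, x a ^ p
            + (∑ a ∈ {a | f a = b} with ¬P a, x a) ^ p) :=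
          sum_le_sum fun b _ =>
            rpow_sum_le_sum_filter_rpow_add_rpow_sum_filter_not _ (fun a _ => hx a) P hp₀ hp₁
      _ = _ := by
          rw [sum_add_distrib, ← sum_fiberwise {a | P a} f (fun a => x a ^ p)]
          simp only [filter_comm]
  have hlight : (Fintype.card β : ℝ) ^ (p - 1) * ∑ b, (∑ a ∈ {a | ¬P a} with f a = b, x a) ^ p ≤
      (∑ a with ¬P a, x a) ^ p := by
    have := card_rpow_mul_sum_rpow_le_rpow_sum univ
      (x := fun b => ∑ a ∈ {a | ¬P a} with f a = b, x a)
      (fun b _ => sum_nonneg fun a _ => hx a) hp₀.le hp₁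
    rwa [card_univ, sum_fiberwise] at this
  calc (Fintype.card β : ℝ) ^ (p - 1) * ∑ b, (∑ a with f a = b, x a) ^ p
      ≤ (Fintype.card β : ℝ) ^ (p - 1) *
          (∑ a with P a, x a ^ p + ∑ b, (∑ a ∈ {a | ¬P a} with f a = b, x a) ^ p) := by
        gcongr
    _ ≤ _ := by rw [mul_add]; gcongr

theorem data_processing_converse_one_shot_general {A E : Type*} [Fintype A] [Fintype E]
    (M : ℕ) (hM : 0 < M) (f : A → Fin M)
    (PE : E → ℝ) (hPE : ∀ e, 0 ≤ PE e) (hPEsum : ∑ e, PE e = 1)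
    (PA : A → E → ℝ) (hPA : ∀ a e, 0 ≤ PA a e)
    (s : ℝ) (hs : 0 < s) (hs1 : s < 1) (c : ℝ) (hc : 1 < c) :
    ((M : ℝ) ^ (-s) * (∑ e, PE e * ∑ m : Fin M,
        (∑ a ∈ Finset.univ.filter (fun a => f a = m), PA a e) ^ (1 - s)) ≤
      (∑ e, PE e *
          ∑ a ∈ Finset.univ.filter (fun a => c / M ≤ PA a e),
            PA a e ^ (1 - s) * (M : ℝ) ^ (-s)) +
        ∑ e, PE e *
          (∑ a ∈ Finset.univ.filter (fun a => PA a e < c / M), PA a e) ^ (1 - s))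
    ∧
    ((M : ℝ) ^ (-s) * (∑ e, PE e * ∑ m : Fin M,
        (∑ a ∈ Finset.univ.filter (fun a => f a = m), PA a e) ^ (1 - s)) ≤
      c ^ (-s) *
          (∑ e, PE e * ∑ a ∈ Finset.univ.filter (fun a => c / M ≤ PA a e), PA a e) +
        (∑ e, PE e *
          ∑ a ∈ Finset.univ.filter (fun a => PA a e < c / M), PA a e) ^ (1 - s)) := by
  have hM₀ : (0 : ℝ) < M := Nat.cast_pos.2 hM
  have hp₀ : 0 < 1 - s := sub_pos.2 hs1
  have hp₁ : 1 - s ≤ 1 := by linarith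
  have hfiber : ∀ e, (M : ℝ) ^ (-s) * ∑ m : Fin M,
        (∑ a ∈ Finset.univ.filter (fun a => f a = m), PA a e) ^ (1 - s) ≤
      ∑ a ∈ Finset.univ.filter (fun a => c / M ≤ PA a e), PA a e ^ (1 - s) * (M : ℝ) ^ (-s) +
        (∑ a ∈ Finset.univ.filter (fun a => PA a e < c / M), PA a e) ^ (1 - s) := fun e => by
    have := card_rpow_mul_sum_rpow_sum_fiber_le f (hPA · e) (c / M ≤ PA · e) hp₀ hp₁
    simp only [Fintype.card_fin, sub_sub_cancel_left, not_le] at this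
    rwa [← sum_mul, mul_comm _ ((M : ℝ) ^ (-s))]
  refine (fun hfirst => ⟨hfirst, hfirst.trans (add_le_add ?heavy ?light)⟩) ?first
  case first =>
    rw [mul_sum]
    simp only [← sum_add_distrib, ← mul_add]
    exact sum_le_sum fun e _ => (mul_left_comm _ _ _).trans_le
      (mul_le_mul_of_nonneg_left (hfiber e) (hPE e))
  case heavy =>
    rw [mul_sum]
    refine sum_le_sum fun e _ => ?_
    rw [mul_left_comm (c ^ (-s))]
    refine mul_le_mul_of_nonneg_left ?_ (hPE e)
    rw [mul_sum]
    exact sum_le_sum fun a ha => rpow_one_sub_mul_rpow_neg_le hM₀.le (by linarith)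
      ((div_le_iff₀ hM₀).1 (mem_filter.1 ha).2) hs.le
  case light =>
    exact sum_mul_rpow_le_rpow_sum_mul_s14 univ (fun e _ => hPE e) hPEsum
      (fun e _ => sum_nonneg fun a _ => hPA a e) hp₀.le hp₁

/-- Data-processing converse one-shot bound: for `c > 1`, `s ∈ (0,1)` and any
function `f : A → {1,…,M}`, two upper bounds on `exp(-s C_{1-s}(f(A)|E|P_{AE}))`. -/
theorem data_processing_converse_one_shot {A E : Type*} [Fintype A] [Fintype E]
    (M : ℕ) (hM : 0 < M) (f : A → Fin M)
    (PE : E → ℝ) (hPE : ∀ e, 0 ≤ PE e) (hPEsum : ∑ e, PE e = 1)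
    (PA : A → E → ℝ) (hPA : ∀ a e, 0 ≤ PA a e) (hPAsum : ∀ e, ∑ a, PA a e = 1)
    (s : ℝ) (hs : 0 < s) (hs1 : s < 1) (c : ℝ) (hc : 1 < c) :
    ((M : ℝ) ^ (-s) * (∑ e, PE e * ∑ m : Fin M,
        (∑ a ∈ Finset.univ.filter (fun a => f a = m), PA a e) ^ (1 - s)) ≤
      (∑ e, PE e *
          ∑ a ∈ Finset.univ.filter (fun a => c / M ≤ PA a e),
            PA a e ^ (1 - s) * (M : ℝ) ^ (-s)) +
        ∑ e, PE e *
          (∑ a ∈ Finset.univ.filter (fun a => PA a e < c / M), PA a e) ^ (1 - s))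
    ∧
    ((M : ℝ) ^ (-s) * (∑ e, PE e * ∑ m : Fin M,
        (∑ a ∈ Finset.univ.filter (fun a => f a = m), PA a e) ^ (1 - s)) ≤
      c ^ (-s) *
          (∑ e, PE e * ∑ a ∈ Finset.univ.filter (fun a => c / M ≤ PA a e), PA a e) +
        (∑ e, PE e *
          ∑ a ∈ Finset.univ.filter (fun a => PA a e < c / M), PA a e) ^ (1 - s)) :=
  data_processing_converse_one_shot_general M hM f PE hPE hPEsum PA hPA s hs hs1 c hc
end
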